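/- arXiv:1903.12413 — 4 statements merged into one kernel-verified Lean document; each statement's English description precedes it below -/
import Mathlib

section
/- For every λ ∈ ℂ₊, the function v ↦ exp{ −(β/(2λ)) Σ_{j=1}^m v_j² + i λ^{−1/2} Σ_{j=1}^m c_j v_j } is integrable with respect to the total-variation measure |ν|, and the function J* : ℂ₊ → ℂ defined by J*(λ) = ∫_{ℝ^m} exp{ −(β/(2λ)) Σ_{j=1}^m v_j² + i λ^{−1/2} Σ_{j=1}^m c_j v_j } dν(v) is analytic (complex differentiable) on ℂ₊. -/
open MeasureTheory

/- A complex Borel measure `ν` on `ℝ^m` with finite total variation `|ν|` is encoded by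
its total variation measure `μ = |ν|` (a finite Borel measure) together with a
Radon–Nikodym density `ρ` of modulus one, so that `dν = ρ dμ` and `d|ν| = dμ`. -/

lemma cast_S' (m : ℕ) (v : Fin m → ℝ) :
    (∑ j, (v j:ℂ)^2) = (((∑ j, (v j)^2 : ℝ)):ℂ) := by push_cast; rfl

lemma cast_T' (m : ℕ) (c v : Fin m → ℝ) :
    (∑ j, (c j:ℂ)*(v j:ℂ)) = (((∑ j, c j * v j : ℝ)):ℂ) := by push_cast; rfl

lemma S_nonneg' (m : ℕ) (v : Fin m → ℝ) : 0 ≤ ∑ j, (v j)^2 :=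
  Finset.sum_nonneg fun j _ => sq_nonneg _

lemma T_abs_le' (m : ℕ) (c v : Fin m → ℝ) :
    |∑ j, c j * v j| ≤ (∑ j, |c j|) * Real.sqrt (∑ j, (v j)^2) := by
  calc |∑ j, c j * v j| ≤ ∑ j, |c j * v j| := Finset.abs_sum_le_sum_abs _ _
    _ ≤ ∑ j, |c j| * Real.sqrt (∑ i, (v i)^2) := by
        apply Finset.sum_le_sum
        intro j _
        rw [abs_mul]
        apply mul_le_mul_of_nonneg_left _ (abs_nonneg _)
        rw [← Real.sqrt_sq_eq_abs]
        exact Real.sqrt_le_sqrt (Finset.single_le_sum (fun i _ => sq_nonneg (v i)) (Finset.mem_univ j))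
    _ = (∑ j, |c j|) * Real.sqrt (∑ j, (v j)^2) := by rw [Finset.sum_mul]

lemma re_aux (u w : ℂ) (S T : ℝ) :
    (u * ((S:ℝ):ℂ) + w * ((T:ℝ):ℂ)).re = u.re * S + w.re * T := by
  simp [Complex.add_re, Complex.mul_re]

lemma div_re_aux (β : ℝ) (z : ℂ) (hz : z ≠ 0) :
    ((β:ℂ)/(2*z)).re = β * z.re / (2*Complex.normSq z) := by
  have h : Complex.normSq z ≠ 0 := ne_of_gt (Complex.normSq_pos.2 hz)
  have h1 : ((2:ℂ)*z).re = 2*z.re := by simp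
  have h2 : ((2:ℂ)*z).im = 2*z.im := by simp
  have h3 : Complex.normSq ((2:ℂ)*z) = 4 * Complex.normSq z := by
    rw [map_mul]; norm_num
  rw [Complex.div_re, h1, h2, h3, Complex.ofReal_re, Complex.ofReal_im]
  field_simp
  ring

lemma abs_w_aux (z : ℂ) :
    ‖Complex.exp (-(1/2)*Complex.log z)‖ = Real.exp (-(1/2)*Real.log (‖z‖)) := by
  rw [Complex.norm_exp]
  congr 1
  simp [Complex.mul_re, Complex.log_re]

lemma norm_exp_exponent_le (m : ℕ) (β : ℝ) (hβ : 0 < β) (c : Fin m → ℝ)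
    (r R : ℝ) (hr : 0 < r) (z : ℂ) (hre : r ≤ z.re) (habs : ‖z‖ ≤ R)
    (v : Fin m → ℝ) :
    ‖Complex.exp (-((β : ℂ)/(2*z)) * ∑ j, (v j : ℂ)^2
        + Complex.I * Complex.exp (-(1/2) * Complex.log z)
          * ∑ j, (c j : ℂ) * (v j : ℂ))‖
    ≤ Real.exp (-((β*r/(2*R^2)) * (Real.sqrt (∑ j, (v j)^2))^2)
        + (Real.exp (-(1/2)*Real.log r) * (∑ j, |c j|)) * Real.sqrt (∑ j, (v j)^2)) := by
  have hz0 : z ≠ 0 := by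
    intro h; rw [h] at hre; simp at hre; linarith
  have hRz : r ≤ ‖z‖ := le_trans hre (Complex.re_le_norm z)
  have hR : 0 < R := lt_of_lt_of_le hr (le_trans hRz habs)
  have hns0 : 0 < Complex.normSq z := Complex.normSq_pos.2 hz0
  have hns : Complex.normSq z ≤ R^2 := by
    rw [← Complex.sq_norm]
    nlinarith [norm_nonneg z]
  set t := Real.sqrt (∑ j, (v j)^2) with ht
  have ht0 : 0 ≤ t := Real.sqrt_nonneg _
  have hSt : (∑ j, (v j)^2) = t^2 := (Real.sq_sqrt (S_nonneg' m v)).symm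
  rw [Complex.norm_exp, Real.exp_le_exp]
  rw [cast_S' m v, cast_T' m c v, re_aux, Complex.neg_re, div_re_aux β z hz0]
  have h1 : β*r/(2*R^2) ≤ β * z.re/(2*Complex.normSq z) := by
    apply div_le_div₀ (by nlinarith) (by nlinarith) (by positivity) (by nlinarith)
  have h4 : (Complex.I * Complex.exp (-(1/2) * Complex.log z)).re * (∑ j, c j * v j)
      ≤ (Real.exp (-(1/2)*Real.log r) * (∑ j, |c j|)) * t := by
    have ha1 : |(Complex.I * Complex.exp (-(1/2) * Complex.log z)).re|
        ≤ Real.exp (-(1/2)*Real.log r) := by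
      refine le_trans (Complex.abs_re_le_norm _) ?_
      rw [norm_mul, Complex.norm_I, one_mul, abs_w_aux]
      apply Real.exp_le_exp.2
      have := Real.log_le_log hr hRz
      linarith
    have ha2 : |∑ j, c j * v j| ≤ (∑ j, |c j|) * t := T_abs_le' m c v
    calc (Complex.I * Complex.exp (-(1/2) * Complex.log z)).re * (∑ j, c j * v j)
        ≤ |(Complex.I * Complex.exp (-(1/2) * Complex.log z)).re * (∑ j, c j * v j)| :=
          le_abs_self _
      _ = |(Complex.I * Complex.exp (-(1/2) * Complex.log z)).re| * |∑ j, c j * v j| :=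
          abs_mul _ _
      _ ≤ Real.exp (-(1/2)*Real.log r) * ((∑ j, |c j|) * t) := by
          apply mul_le_mul ha1 ha2 (abs_nonneg _) (Real.exp_pos _).le
      _ = (Real.exp (-(1/2)*Real.log r) * (∑ j, |c j|)) * t := by ring
  have h5 : -(β * z.re/(2*Complex.normSq z)) * (∑ j, (v j)^2)
      ≤ -((β*r/(2*R^2)) * t^2) := by
    rw [hSt]
    nlinarith [sq_nonneg t]
  linarith

noncomputable def Fd (m : ℕ) (β : ℝ) (c : Fin m → ℝ) (ρ : (Fin m → ℝ) → ℂ) (z : ℂ) (v : Fin m → ℝ) : ℂ :=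
  Complex.exp (-((β : ℂ)/(2*z)) * ∑ j, (v j : ℂ)^2
    + Complex.I * Complex.exp (-(1/2) * Complex.log z) * ∑ j, (c j : ℂ) * (v j : ℂ)) * ρ v

noncomputable def Fd' (m : ℕ) (β : ℝ) (c : Fin m → ℝ) (ρ : (Fin m → ℝ) → ℂ) (z : ℂ) (v : Fin m → ℝ) : ℂ :=
  ((β:ℂ)/(2*z^2) * ∑ j, (v j:ℂ)^2
    + Complex.I * (-(1/(2*z)) * Complex.exp (-(1/2)*Complex.log z)) * ∑ j, (c j:ℂ)*(v j:ℂ))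
  * Fd m β c ρ z v

lemma hasDerivAt_Fd (m : ℕ) (β : ℝ) (c : Fin m → ℝ) (ρ : (Fin m → ℝ) → ℂ) (z : ℂ)
    (hzre : 0 < z.re) (v : Fin m → ℝ) :
    HasDerivAt (fun z => Fd m β c ρ z v) (Fd' m β c ρ z v) z := by
  have hz0 : z ≠ 0 := by intro h; rw [h] at hzre; simp at hzre
  have h2z : (2:ℂ)*z ≠ 0 := mul_ne_zero two_ne_zero hz0
  have hd1 : HasDerivAt (fun z : ℂ => (β:ℂ)/(2*z))
      ((0*(2*z) - (β:ℂ)*(2*1))/(2*z)^2) z :=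
    (hasDerivAt_const z ((β:ℂ))).div ((hasDerivAt_id z).const_mul 2) h2z
  have hd2 : HasDerivAt (fun z : ℂ => -((β:ℂ)/(2*z)) * ∑ j, (v j:ℂ)^2)
      (-((0*(2*z) - (β:ℂ)*(2*1))/(2*z)^2) * ∑ j, (v j:ℂ)^2) z :=
    hd1.neg.mul_const _
  have hd3 : HasDerivAt Complex.log z⁻¹ z :=
    Complex.hasDerivAt_log (Complex.mem_slitPlane_iff.2 (Or.inl hzre))
  have hd4 : HasDerivAt (fun z : ℂ => -(1/2) * Complex.log z) (-(1/2) * z⁻¹) z :=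
    hd3.const_mul _
  have hd5 : HasDerivAt (fun z : ℂ => Complex.exp (-(1/2) * Complex.log z))
      (Complex.exp (-(1/2) * Complex.log z) * (-(1/2) * z⁻¹)) z := hd4.cexp
  have hd6 : HasDerivAt (fun z : ℂ => Complex.I * Complex.exp (-(1/2) * Complex.log z)
      * ∑ j, (c j : ℂ) * (v j : ℂ))
      (Complex.I * (Complex.exp (-(1/2) * Complex.log z) * (-(1/2) * z⁻¹))
        * ∑ j, (c j : ℂ) * (v j : ℂ)) z :=
    (hd5.const_mul _).mul_const _
  have hd7 := ((hd2.add hd6).cexp).mul_const (ρ v)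
  simp only [Fd, Fd']
  refine hd7.congr_deriv ?_
  simp only [Pi.add_apply]
  field_simp
  ring

noncomputable def Kd (m : ℕ) (β : ℝ) (c : Fin m → ℝ) (r R : ℝ) : ℝ :=
  Real.exp ((Real.exp (-(1/2)*Real.log r) * (∑ j, |c j|))^2/(2*(β*r/(2*R^2)))) *
    ((β/(2*r^2)) * (4/(β*r/(2*R^2)))
      + (1/(2*r) * Real.exp (-(1/2)*Real.log r) * (∑ j, |c j|)) * (1 + 4/(β*r/(2*R^2))))

lemma quad_bound' (a b t : ℝ) (ha : 0 < a) :
    -(a*t^2) + b*t ≤ b^2/(2*a) + -(a/2*t^2) := by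
  rw [← sub_nonneg]
  have h : b^2/(2*a) + -(a/2*t^2) - (-(a*t^2) + b*t) = (a*t-b)^2/(2*a) := by
    field_simp; ring
  rw [h]; positivity

lemma sq_exp_bound' (a t : ℝ) (ha : 0 < a) :
    t^2 * Real.exp (-(a/2*t^2)) ≤ 4/a := by
  have hx : (a/4)*t^2 ≤ Real.exp (a/2*t^2) := by
    have h1 := Real.add_one_le_exp ((a/4)*t^2)
    have h2 : Real.exp ((a/4)*t^2) ≤ Real.exp (a/2*t^2) := by
      apply Real.exp_le_exp.2; nlinarith [sq_nonneg t]
    nlinarith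
  rw [Real.exp_neg, ← div_eq_mul_inv, div_le_div_iff₀ (Real.exp_pos _) ha]
  nlinarith [Real.exp_pos (a/2*t^2)]

lemma lin_exp_bound' (a t : ℝ) (ha : 0 < a) :
    t * Real.exp (-(a/2*t^2)) ≤ 1 + 4/a := by
  have h1 : t * Real.exp (-(a/2*t^2)) ≤ (1 + t^2) * Real.exp (-(a/2*t^2)) := by
    apply mul_le_mul_of_nonneg_right (by nlinarith [sq_nonneg (t-1)]) (Real.exp_pos _).le
  have h2 : Real.exp (-(a/2*t^2)) ≤ 1 := Real.exp_le_one_iff.2 (by nlinarith [sq_nonneg t])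
  have h3 := sq_exp_bound' a t ha
  nlinarith [Real.exp_pos (-(a/2*t^2))]

lemma bound_aux' (a b A D t : ℝ) (ha : 0 < a) (hA : 0 ≤ A) (hD : 0 ≤ D) (ht : 0 ≤ t) :
    (A * t^2 + D * t) * Real.exp (-(a*t^2) + b*t) ≤
      Real.exp (b^2/(2*a)) * (A * (4/a) + D * (1 + 4/a)) := by
  have h2 : Real.exp (-(a*t^2)+b*t) ≤ Real.exp (b^2/(2*a)) * Real.exp (-(a/2*t^2)) := by
    rw [← Real.exp_add]; exact Real.exp_le_exp.2 (quad_bound' a b t ha)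
  have h3 := sq_exp_bound' a t ha
  have h4 := lin_exp_bound' a t ha
  have hB := Real.exp_pos (b^2/(2*a))
  calc (A * t^2 + D * t) * Real.exp (-(a*t^2) + b*t)
      ≤ (A * t^2 + D * t) * (Real.exp (b^2/(2*a)) * Real.exp (-(a/2*t^2))) := by
        apply mul_le_mul_of_nonneg_left h2 (by positivity)
    _ = Real.exp (b^2/(2*a)) * (A * (t^2 * Real.exp (-(a/2*t^2))) + D * (t * Real.exp (-(a/2*t^2)))) := by ring
    _ ≤ Real.exp (b^2/(2*a)) * (A * (4/a) + D * (1 + 4/a)) := by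
        apply mul_le_mul_of_nonneg_left _ hB.le
        have := mul_le_mul_of_nonneg_left h3 hA
        have := mul_le_mul_of_nonneg_left h4 hD
        linarith

lemma norm_Fd'_le (m : ℕ) (β : ℝ) (hβ : 0 < β) (c : Fin m → ℝ) (ρ : (Fin m → ℝ) → ℂ)
    (hρ1 : ∀ v, ‖ρ v‖ = 1) (r R : ℝ) (hr : 0 < r) (z : ℂ)
    (hre : r ≤ z.re) (habs : ‖z‖ ≤ R) (v : Fin m → ℝ) :
    ‖Fd' m β c ρ z v‖ ≤ Kd m β c r R := by
  have hrz : r ≤ ‖z‖ := le_trans hre (Complex.re_le_norm z)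
  have hR : 0 < R := lt_of_lt_of_le hr (le_trans hrz habs)
  have ha : 0 < β*r/(2*R^2) := by positivity
  have hA : 0 ≤ β/(2*r^2) := by positivity
  have hD : 0 ≤ 1/(2*r) * Real.exp (-(1/2)*Real.log r) * (∑ j, |c j|) := by
    have : 0 ≤ ∑ j, |c j| := Finset.sum_nonneg fun j _ => abs_nonneg _
    positivity
  set t := Real.sqrt (∑ j, (v j)^2) with htdef
  have ht0 : 0 ≤ t := Real.sqrt_nonneg _
  have hSt : (∑ j, (v j)^2) = t^2 := (Real.sq_sqrt (S_nonneg' m v)).symm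
  have hpre : ‖(β:ℂ)/(2*z^2) * ∑ j, (v j:ℂ)^2
      + Complex.I * (-(1/(2*z)) * Complex.exp (-(1/2)*Complex.log z)) * ∑ j, (c j:ℂ)*(v j:ℂ)‖
      ≤ (β/(2*r^2)) * t^2 + (1/(2*r) * Real.exp (-(1/2)*Real.log r) * (∑ j, |c j|)) * t := by
    refine (norm_add_le _ _).trans ?_
    have e1 : ‖(β:ℂ)/(2*z^2) * ∑ j, (v j:ℂ)^2‖ ≤ (β/(2*r^2)) * t^2 := by
      rw [norm_mul, cast_S' m v, Complex.norm_real, Real.norm_eq_abs,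
        abs_of_nonneg (S_nonneg' m v), hSt]
      apply mul_le_mul_of_nonneg_right _ (sq_nonneg t)
      rw [norm_div, norm_mul, norm_pow]
      simp only [Complex.norm_real, Real.norm_eq_abs, Complex.norm_ofNat]
      rw [abs_of_nonneg hβ.le]
      apply div_le_div₀ (by positivity) le_rfl (by positivity) (by nlinarith)
    have e2 : ‖Complex.I * (-(1/(2*z)) * Complex.exp (-(1/2)*Complex.log z)) * ∑ j, (c j:ℂ)*(v j:ℂ)‖
        ≤ (1/(2*r) * Real.exp (-(1/2)*Real.log r) * (∑ j, |c j|)) * t := by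
      rw [norm_mul, norm_mul, cast_T' m c v, Complex.norm_real, Real.norm_eq_abs,
        Complex.norm_I, one_mul]
      rw [norm_mul, norm_neg, norm_div, norm_one, norm_mul]
      simp only [Complex.norm_ofNat]
      have hww : ‖Complex.exp (-(1/2)*Complex.log z)‖ ≤ Real.exp (-(1/2)*Real.log r) := by
        rw [abs_w_aux]
        apply Real.exp_le_exp.2
        have := Real.log_le_log hr hrz
        linarith
      have h1z : 1/(2*‖z‖) ≤ 1/(2*r) := by
        apply div_le_div₀ (by norm_num) le_rfl (by positivity) (by linarith)
      have hTt : |∑ j, c j * v j| ≤ (∑ j, |c j|) * t := T_abs_le' m c v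
      calc 1/(2*‖z‖) * ‖Complex.exp (-(1/2)*Complex.log z)‖ * |∑ j, c j * v j|
          ≤ 1/(2*r) * Real.exp (-(1/2)*Real.log r) * ((∑ j, |c j|) * t) := by
            apply mul_le_mul _ hTt (abs_nonneg _) (by positivity)
            apply mul_le_mul h1z hww (norm_nonneg _) (by positivity)
        _ = (1/(2*r) * Real.exp (-(1/2)*Real.log r) * (∑ j, |c j|)) * t := by ring
    linarith
  have hexp : ‖Complex.exp (-((β : ℂ)/(2*z)) * ∑ j, (v j : ℂ)^2
      + Complex.I * Complex.exp (-(1/2) * Complex.log z)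
        * ∑ j, (c j : ℂ) * (v j : ℂ))‖
      ≤ Real.exp (-((β*r/(2*R^2))*t^2) + (Real.exp (-(1/2)*Real.log r) * (∑ j, |c j|))*t) :=
    norm_exp_exponent_le m β hβ c r R hr z hre habs v
  rw [Fd', Fd, norm_mul, norm_mul, hρ1 v, mul_one]
  refine le_trans (mul_le_mul hpre hexp (norm_nonneg _) (by positivity)) ?_
  rw [Kd]
  exact bound_aux' (β*r/(2*R^2)) (Real.exp (-(1/2)*Real.log r) * (∑ j, |c j|))
    (β/(2*r^2)) (1/(2*r) * Real.exp (-(1/2)*Real.log r) * (∑ j, |c j|)) t ha hA hD ht0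


theorem stmt10 (m : ℕ) (hm : 1 ≤ m)
    (μ : Measure (Fin m → ℝ)) [IsFiniteMeasure μ]
    (ρ : (Fin m → ℝ) → ℂ) (hρ : Measurable ρ) (hρ1 : ∀ v, ‖ρ v‖ = 1)
    (β : ℝ) (hβ : 0 < β) (c : Fin m → ℝ) :
    (∀ z : ℂ, 0 < z.re →
      Integrable (fun v : Fin m → ℝ =>
        Complex.exp (-((β : ℂ)/(2*z)) * ∑ j, (v j : ℂ)^2
          + Complex.I * Complex.exp (-(1/2) * Complex.log z)
            * ∑ j, (c j : ℂ) * (v j : ℂ))) μ)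
    ∧ DifferentiableOn ℂ
        (fun z : ℂ => ∫ v, Complex.exp (-((β : ℂ)/(2*z)) * ∑ j, (v j : ℂ)^2
          + Complex.I * Complex.exp (-(1/2) * Complex.log z)
            * ∑ j, (c j : ℂ) * (v j : ℂ)) * ρ v ∂μ)
        {z : ℂ | 0 < z.re} := by
  have hcont : ∀ z : ℂ, Continuous fun v : Fin m → ℝ =>
      Complex.exp (-((β : ℂ)/(2*z)) * ∑ j, (v j : ℂ)^2
        + Complex.I * Complex.exp (-(1/2) * Complex.log z)
          * ∑ j, (c j : ℂ) * (v j : ℂ)) := by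
    intro z; fun_prop
  have hKz : ∀ z : ℂ, 0 < z.re → ∃ K : ℝ, ∀ v : Fin m → ℝ,
      ‖Complex.exp (-((β : ℂ)/(2*z)) * ∑ j, (v j : ℂ)^2
        + Complex.I * Complex.exp (-(1/2) * Complex.log z)
          * ∑ j, (c j : ℂ) * (v j : ℂ))‖ ≤ K := by
    intro z hz
    have hRz : z.re ≤ ‖z‖ := Complex.re_le_norm z
    have habs0 : 0 < ‖z‖ := lt_of_lt_of_le hz hRz
    have ha : 0 < β*z.re/(2*(‖z‖)^2) := by positivity
    refine ⟨Real.exp ((Real.exp (-(1/2)*Real.log z.re) * (∑ j, |c j|))^2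
      /(2*(β*z.re/(2*(‖z‖)^2)))), fun v => ?_⟩
    refine (norm_exp_exponent_le m β hβ c z.re (‖z‖) hz z le_rfl le_rfl v).trans ?_
    apply Real.exp_le_exp.2
    have hq := quad_bound' (β*z.re/(2*(‖z‖)^2))
      (Real.exp (-(1/2)*Real.log z.re) * (∑ j, |c j|)) (Real.sqrt (∑ j, (v j)^2)) ha
    have hnn : 0 ≤ (β*z.re/(2*(‖z‖)^2))/2*(Real.sqrt (∑ j, (v j)^2))^2 := by positivity
    linarith
  have hint : ∀ z : ℂ, 0 < z.re →
      Integrable (fun v : Fin m → ℝ =>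
        Complex.exp (-((β : ℂ)/(2*z)) * ∑ j, (v j : ℂ)^2
          + Complex.I * Complex.exp (-(1/2) * Complex.log z)
            * ∑ j, (c j : ℂ) * (v j : ℂ))) μ := by
    intro z hz
    obtain ⟨K, hK⟩ := hKz z hz
    exact Integrable.mono' (integrable_const K) (hcont z).aestronglyMeasurable
      (Filter.Eventually.of_forall hK)
  refine ⟨hint, ?_⟩
  intro z₀ hz₀
  simp only [Set.mem_setOf_eq] at hz₀
  apply DifferentiableAt.differentiableWithinAt
  have hε : 0 < z₀.re/2 := half_pos hz₀
  have hball : ∀ z ∈ Metric.ball z₀ (z₀.re/2),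
      z₀.re/2 ≤ z.re ∧ ‖z‖ ≤ ‖z₀‖ + z₀.re/2 := by
    intro z hzb
    rw [Metric.mem_ball, Complex.dist_eq] at hzb
    have h1 : |(z - z₀).re| ≤ ‖z - z₀‖ := Complex.abs_re_le_norm _
    have h1' : (z - z₀).re = z.re - z₀.re := by simp
    have h2 := abs_lt.1 (lt_of_le_of_lt h1 hzb)
    rw [h1'] at h2
    constructor
    · linarith [h2.1]
    · have h3 : ‖z‖ ≤ ‖z₀‖ + ‖z - z₀‖ := by
        calc ‖z‖ = ‖z₀ + (z - z₀)‖ := by ring_nf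
          _ ≤ ‖z₀‖ + ‖z - z₀‖ := norm_add_le _ _
      linarith
  have hintρ : Integrable (fun v : Fin m → ℝ =>
      Complex.exp (-((β : ℂ)/(2*z₀)) * ∑ j, (v j : ℂ)^2
        + Complex.I * Complex.exp (-(1/2) * Complex.log z₀)
          * ∑ j, (c j : ℂ) * (v j : ℂ)) * ρ v) μ := by
    obtain ⟨K, hK⟩ := hKz z₀ hz₀
    refine Integrable.mono' (integrable_const K)
      ((hcont z₀).aestronglyMeasurable.mul hρ.aestronglyMeasurable)
      (Filter.Eventually.of_forall fun v => ?_)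
    rw [norm_mul, hρ1 v, mul_one]
    exact hK v
  have hF'meas : AEStronglyMeasurable (fun v => Fd' m β c ρ z₀ v) μ := by
    have h1 : Continuous fun v : Fin m → ℝ =>
        ((β:ℂ)/(2*z₀^2) * ∑ j, (v j:ℂ)^2
        + Complex.I * (-(1/(2*z₀)) * Complex.exp (-(1/2)*Complex.log z₀)) * ∑ j, (c j:ℂ)*(v j:ℂ)) := by
      fun_prop
    exact h1.aestronglyMeasurable.mul
      ((hcont z₀).aestronglyMeasurable.mul hρ.aestronglyMeasurable)
  have hbound : ∀ᵐ v ∂μ, ∀ z ∈ Metric.ball z₀ (z₀.re/2),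
      ‖Fd' m β c ρ z v‖ ≤ Kd m β c (z₀.re/2) (‖z₀‖ + z₀.re/2) := by
    apply Filter.Eventually.of_forall
    intro v z hzb
    obtain ⟨hre, habs⟩ := hball z hzb
    exact norm_Fd'_le m β hβ c ρ hρ1 _ _ hε z hre habs v
  have hdiff : ∀ᵐ v ∂μ, ∀ z ∈ Metric.ball z₀ (z₀.re/2),
      HasDerivAt (fun z => Complex.exp (-((β : ℂ)/(2*z)) * ∑ j, (v j : ℂ)^2
        + Complex.I * Complex.exp (-(1/2) * Complex.log z)
          * ∑ j, (c j : ℂ) * (v j : ℂ)) * ρ v) (Fd' m β c ρ z v) z := by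
    apply Filter.Eventually.of_forall
    intro v z hzb
    have hzre : 0 < z.re := lt_of_lt_of_le hε (hball z hzb).1
    exact hasDerivAt_Fd m β c ρ z hzre v
  have hmeas : ∀ᶠ z in nhds z₀, AEStronglyMeasurable
      (fun v : Fin m → ℝ => Complex.exp (-((β : ℂ)/(2*z)) * ∑ j, (v j : ℂ)^2
        + Complex.I * Complex.exp (-(1/2) * Complex.log z)
          * ∑ j, (c j : ℂ) * (v j : ℂ)) * ρ v) μ :=
    Filter.Eventually.of_forall fun z =>
      (hcont z).aestronglyMeasurable.mul hρ.aestronglyMeasurable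
  have hbig := hasDerivAt_integral_of_dominated_loc_of_deriv_le (Metric.ball_mem_nhds z₀ hε) hmeas hintρ
    hF'meas hbound (integrable_const _) hdiff
  exact hbig.2.differentiableAt
end

section
/- Suppose A ≥ 0 satisfies |c_j| ≤ A for all j = 1,…,m, q₀ > 0, and ∫_{ℝ^m} exp{ (A/√(2q₀)) Σ_{j=1}^m |v_j| } d|ν|(v) < ∞. Then for every real number q with |q| > q₀, the limit of J*(λ) = ∫_{ℝ^m} exp{ −(β/(2λ)) Σ_{j=1}^m v_j² + i λ^{−1/2} Σ_{j=1}^m c_j v_j } dν(v) as λ → −iq with λ ∈ ℂ₊ exists and equals ∫_{ℝ^m} exp{ −(iβ/(2q)) Σ_{j=1}^m v_j² + i ((1 + i·sign(q))/√(2|q|)) Σ_{j=1}^m c_j v_j } dν(v); here (1 + i·sign(q))/√(2|q|) is the principal value of (−iq)^{−1/2}. -/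
open MeasureTheory

open Filter Set

noncomputable section

lemma exp_neg_half_log_arg_parts (z : ℂ) :
    (-(1/2 : ℂ) * Complex.log z).re = -(1/2) * Real.log (‖z‖) ∧
    (-(1/2 : ℂ) * Complex.log z).im = -(1/2) * Complex.arg z := by
  have h : (-(1/2) : ℂ) = ((-(1/2) : ℝ) : ℂ) := by norm_num
  rw [h, Complex.re_ofReal_mul, Complex.im_ofReal_mul, Complex.log_re, Complex.log_im]
  exact ⟨rfl, rfl⟩

lemma real_exp_neg_half_log {r : ℝ} (hr : 0 < r) :
    Real.exp (-(1/2) * Real.log r) = (Real.sqrt r)⁻¹ := by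
  rw [← Real.exp_log (inv_pos.2 (Real.sqrt_pos.2 hr)), Real.log_inv, Real.log_sqrt hr.le]
  ring_nf

lemma sqrtz_re (z : ℂ) (hz : z ≠ 0) :
    (Complex.exp (-(1/2) * Complex.log z)).re
      = (Real.sqrt (‖z‖))⁻¹ * Real.cos ((1/2) * Complex.arg z) := by
  obtain ⟨h1, h2⟩ := exp_neg_half_log_arg_parts z
  rw [Complex.exp_re, h1, h2, real_exp_neg_half_log (norm_pos_iff.mpr hz)]
  rw [show -(1/2) * Complex.arg z = -((1/2) * Complex.arg z) by ring, Real.cos_neg]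

lemma sqrtz_im (z : ℂ) (hz : z ≠ 0) :
    (Complex.exp (-(1/2) * Complex.log z)).im
      = -((Real.sqrt (‖z‖))⁻¹ * Real.sin ((1/2) * Complex.arg z)) := by
  obtain ⟨h1, h2⟩ := exp_neg_half_log_arg_parts z
  rw [Complex.exp_im, h1, h2, real_exp_neg_half_log (norm_pos_iff.mpr hz)]
  rw [show -(1/2) * Complex.arg z = -((1/2) * Complex.arg z) by ring, Real.sin_neg]
  ring

lemma sqrtz_re_pos (z : ℂ) (hz : z ≠ 0) (hre : 0 ≤ z.re) :
    0 < (Complex.exp (-(1/2) * Complex.log z)).re := by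
  rw [sqrtz_re z hz]
  have harg : |Complex.arg z| ≤ Real.pi / 2 := Complex.abs_arg_le_pi_div_two_iff.2 hre
  have hpi := Real.pi_pos
  have h1 : -(Real.pi/2) < (1/2) * Complex.arg z := by
    rcases abs_le.1 harg with ⟨h, _⟩; linarith
  have h2 : (1/2) * Complex.arg z < Real.pi/2 := by
    rcases abs_le.1 harg with ⟨_, h⟩; linarith
  exact mul_pos (inv_pos.2 (Real.sqrt_pos.2 (norm_pos_iff.mpr hz)))
    (Real.cos_pos_of_mem_Ioo ⟨h1, h2⟩)

lemma sqrtz_im_bound (z : ℂ) (hz : z ≠ 0) (hre : 0 ≤ z.re) :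
    |(Complex.exp (-(1/2) * Complex.log z)).im|
      ≤ (Real.sqrt 2 / 2) * (Real.sqrt (‖z‖))⁻¹ := by
  rw [sqrtz_im z hz, abs_neg, abs_mul]
  have hinv : 0 ≤ (Real.sqrt (‖z‖))⁻¹ := by positivity
  rw [abs_of_nonneg hinv]
  have harg : |Complex.arg z| ≤ Real.pi / 2 := Complex.abs_arg_le_pi_div_two_iff.2 hre
  have hpi := Real.pi_pos
  have key : ∀ y : ℝ, 0 ≤ y → y ≤ Real.pi / 4 → Real.sin y ≤ Real.sqrt 2 / 2 := by
    intro y h0 h1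
    rw [← Real.sin_pi_div_four]
    rcases eq_or_lt_of_le h1 with h | h
    · rw [h]
    · exact le_of_lt (Real.strictMonoOn_sin ⟨by linarith, by linarith⟩
        ⟨by linarith, by linarith⟩ h)
  have hsin : |Real.sin ((1/2) * Complex.arg z)| ≤ Real.sqrt 2 / 2 := by
    set x := (1/2) * Complex.arg z with hx
    have habs : |x| ≤ Real.pi / 4 := by
      rw [hx, abs_mul, abs_of_pos (by norm_num : (0:ℝ) < 1/2)]
      nlinarith [abs_nonneg (Complex.arg z)]
    rcases le_or_gt 0 x with h | h
    · rw [abs_of_nonneg (Real.sin_nonneg_of_nonneg_of_le_pi h (by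
        rcases abs_le.1 habs with ⟨_, h2⟩; linarith))]
      exact key x h (by rcases abs_le.1 habs with ⟨_, h2⟩; linarith)
    · have : Real.sin x < 0 ∨ Real.sin x = 0 ∨ 0 < Real.sin x := by
        rcases lt_trichotomy (Real.sin x) 0 with h'|h'|h' <;> tauto
      have hnx : Real.sin (-x) ≤ Real.sqrt 2 / 2 :=
        key (-x) (by linarith) (by rcases abs_le.1 habs with ⟨h1, _⟩; linarith)
      rw [Real.sin_neg] at hnx
      rcases abs_cases (Real.sin x) with ⟨he, _⟩ | ⟨he, _⟩ <;> rw [he]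
      · calc Real.sin x ≤ 0 := Real.sin_nonpos_of_nonpos_of_neg_pi_le (le_of_lt h)
              (by rcases abs_le.1 habs with ⟨h1, _⟩; linarith)
          _ ≤ Real.sqrt 2 / 2 := by positivity
      · linarith
  calc (√‖z‖)⁻¹ * |Real.sin (1 / 2 * z.arg)|
      ≤ (√‖z‖)⁻¹ * (Real.sqrt 2 / 2) :=
        mul_le_mul_of_nonneg_left hsin hinv
    _ = Real.sqrt 2 / 2 * (√‖z‖)⁻¹ := by ring

lemma sqrtz_sq (z : ℂ) (hz : z ≠ 0) :
    (Complex.exp (-(1/2) * Complex.log z))^2 = z⁻¹ := by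
  rw [sq, ← Complex.exp_add, show -(1/2 : ℂ) * Complex.log z + -(1/2) * Complex.log z
    = -(Complex.log z) by ring, Complex.exp_neg, Complex.exp_log hz]

lemma sqrt_neg_I_mul (q : ℝ) (hq : q ≠ 0) :
    Complex.exp (-(1/2) * Complex.log (-(Complex.I * (q : ℂ))))
      = (1 + Complex.I * (Real.sign q : ℂ)) / ((Real.sqrt (2 * |q|) : ℝ) : ℂ) := by
  set z₀ : ℂ := -(Complex.I * (q : ℂ)) with hz₀def
  have hqC : (q : ℂ) ≠ 0 := Complex.ofReal_ne_zero.2 hq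
  have hz₀ : z₀ ≠ 0 := by
    simp [hz₀def, Complex.I_ne_zero, hqC]
  have hre : z₀.re = 0 := by simp [hz₀def]
  set w := Complex.exp (-(1/2) * Complex.log z₀) with hw
  set t := (1 + Complex.I * (Real.sign q : ℂ)) / ((Real.sqrt (2 * |q|) : ℝ) : ℂ) with ht
  have hqabs : (0:ℝ) < |q| := abs_pos.2 hq
  have hrpos : (0:ℝ) < Real.sqrt (2 * |q|) := Real.sqrt_pos.2 (by positivity)
  have hrne : ((Real.sqrt (2 * |q|) : ℝ) : ℂ) ≠ 0 := Complex.ofReal_ne_zero.2 (ne_of_gt hrpos)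
  have hrsq : ((Real.sqrt (2 * |q|) : ℝ) : ℂ)^2 = ((2 * |q| : ℝ) : ℂ) := by
    rw [← Complex.ofReal_pow, Real.sq_sqrt (by positivity)]
  have hz₀inv : z₀⁻¹ = Complex.I / (q : ℂ) := by
    rw [eq_div_iff hqC]
    rw [inv_mul_eq_div, div_eq_iff hz₀]
    rw [hz₀def]; ring_nf; rw [Complex.I_sq]; ring
  have hw2 : w^2 = z₀⁻¹ := sqrtz_sq z₀ hz₀
  have ht2 : t^2 = z₀⁻¹ := by
    rw [hz₀inv, ht, div_pow, hrsq]
    have hs : ((Real.sign q : ℝ) : ℂ) * ((Real.sign q : ℝ) : ℂ) = 1 := by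
      rcases lt_or_gt_of_ne hq with h | h
      · rw [Real.sign_of_neg h]; norm_num
      · rw [Real.sign_of_pos h]; norm_num
    have hnum : (1 + Complex.I * (Real.sign q : ℂ))^2 = 2 * Complex.I * (Real.sign q : ℂ) := by
      have : (1 + Complex.I * (Real.sign q : ℂ))^2
          = 1 + 2 * Complex.I * (Real.sign q : ℂ)
            + Complex.I^2 * ((Real.sign q : ℂ) * (Real.sign q : ℂ)) := by ring
      rw [this, hs, Complex.I_sq]; ring
    rw [hnum]
    rw [div_eq_div_iff (by rw [← hrsq]; exact pow_ne_zero 2 hrne) hqC]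
    have hsignq : ((Real.sign q : ℝ) : ℂ) * (q : ℂ) = ((|q| : ℝ) : ℂ) := by
      rw [← Complex.ofReal_mul]
      congr 1
      rcases lt_or_gt_of_ne hq with h | h
      · rw [Real.sign_of_neg h, abs_of_neg h]; ring
      · rw [Real.sign_of_pos h, abs_of_pos h]; ring
    calc 2 * Complex.I * (Real.sign q : ℂ) * (q:ℂ)
        = 2 * Complex.I * ((Real.sign q : ℂ) * (q:ℂ)) := by ring
      _ = Complex.I * ((2 * |q| : ℝ) : ℂ) := by rw [hsignq]; push_cast; ring
  have hwre : 0 < w.re := sqrtz_re_pos z₀ hz₀ (le_of_eq hre.symm)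
  have htre : 0 < t.re := by
    rw [ht, Complex.div_ofReal_re]
    have : (1 + Complex.I * (Real.sign q : ℂ)).re = 1 := by simp
    rw [this]
    positivity
  have hfac : (w - t) * (w + t) = 0 := by
    have : (w - t) * (w + t) = w^2 - t^2 := by ring
    rw [this, hw2, ht2, sub_self]
  rcases mul_eq_zero.1 hfac with h | h
  · exact sub_eq_zero.1 h
  · exfalso
    have : w = -t := by linear_combination h
    have : w.re = -t.re := by rw [this, Complex.neg_re]
    linarith

lemma norm_bound_lemma {m : ℕ} (β A q₀ : ℝ) (hβ : 0 < β) (hA : 0 ≤ A) (hq₀ : 0 < q₀)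
    (c v : Fin m → ℝ) (hcA : ∀ j, |c j| ≤ A) (ρv : ℂ) (hρv : ‖ρv‖ = 1)
    (z : ℂ) (hz : 0 < z.re) (hzabs : q₀ < ‖z‖) :
    ‖Complex.exp (-((β : ℂ)/(2*z)) * ∑ j, (v j : ℂ)^2
        + Complex.I * Complex.exp (-(1/2) * Complex.log z) * ∑ j, (c j : ℂ) * (v j : ℂ)) * ρv‖
      ≤ Real.exp ((A / Real.sqrt (2 * q₀)) * ∑ j, |v j|) := by
  have hzne : z ≠ 0 := by
    intro h; rw [h] at hz; simp at hz
  rw [norm_mul, hρv, mul_one, Complex.norm_exp]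
  apply Real.exp_le_exp.2
  set s1 : ℝ := ∑ j, (v j)^2 with hs1
  set s2 : ℝ := ∑ j, c j * v j with hs2
  have hc1 : (∑ j, ((v j : ℂ))^2) = ((s1 : ℝ) : ℂ) := by rw [hs1]; push_cast; ring
  have hc2 : (∑ j, ((c j : ℂ)) * ((v j : ℂ))) = ((s2 : ℝ) : ℂ) := by rw [hs2]; push_cast; ring
  rw [hc1, hc2]
  set W := Complex.exp (-(1/2) * Complex.log z) with hW
  have hre : (-((β : ℂ)/(2*z)) * ((s1:ℝ):ℂ) + Complex.I * W * ((s2:ℝ):ℂ)).re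
      = (-((β : ℂ)/(2*z))).re * s1 + (-W.im) * s2 := by
    simp [Complex.add_re, Complex.mul_re, Complex.I_re, Complex.I_im, Complex.mul_im]
    try ring
  rw [hre]
  have hterm1 : (-((β : ℂ)/(2*z))).re * s1 ≤ 0 := by
    have hrw : -((β : ℂ)/(2*z)) = ((-(β/2) : ℝ) : ℂ) * z⁻¹ := by push_cast; try ring
    rw [hrw, Complex.re_ofReal_mul, Complex.inv_re]
    have h1 : 0 ≤ z.re / Complex.normSq z := div_nonneg hz.le (Complex.normSq_nonneg z)
    have h2 : 0 ≤ s1 := Finset.sum_nonneg fun j _ => sq_nonneg _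
    nlinarith [mul_nonneg (mul_nonneg (le_of_lt (half_pos hβ)) h1) h2]
  have hterm2 : (-W.im) * s2 ≤ (A / Real.sqrt (2 * q₀)) * ∑ j, |v j| := by
    have h1 : (-W.im) * s2 ≤ |W.im| * |s2| := by
      calc (-W.im) * s2 ≤ |(-W.im) * s2| := le_abs_self _
        _ = |W.im| * |s2| := by rw [abs_mul, abs_neg]
    have h2 : |s2| ≤ A * ∑ j, |v j| := by
      rw [hs2, Finset.mul_sum]
      calc |∑ j, c j * v j| ≤ ∑ j, |c j * v j| := Finset.abs_sum_le_sum_abs _ _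
        _ ≤ ∑ j, A * |v j| := Finset.sum_le_sum fun j _ => by
            rw [abs_mul]; exact mul_le_mul_of_nonneg_right (hcA j) (abs_nonneg _)
    have h3 : |W.im| ≤ (Real.sqrt 2 / 2) * (Real.sqrt (‖z‖))⁻¹ :=
      sqrtz_im_bound z hzne hz.le
    have h4 : (Real.sqrt 2 / 2) * (Real.sqrt (‖z‖))⁻¹ ≤ (Real.sqrt (2 * q₀))⁻¹ := by
      have hsq : Real.sqrt q₀ ≤ Real.sqrt (‖z‖) :=
        Real.sqrt_le_sqrt hzabs.le
      have hq0pos : 0 < Real.sqrt q₀ := Real.sqrt_pos.2 hq₀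
      have h5 : (Real.sqrt (‖z‖))⁻¹ ≤ (Real.sqrt q₀)⁻¹ :=
        inv_anti₀ hq0pos hsq
      have h6 : Real.sqrt (2 * q₀) = Real.sqrt 2 * Real.sqrt q₀ := Real.sqrt_mul (by norm_num) _
      have h7 : Real.sqrt 2 / 2 = (Real.sqrt 2)⁻¹ := by
        rw [inv_eq_one_div, div_eq_div_iff (by norm_num : (2:ℝ) ≠ 0)
          (by positivity : Real.sqrt 2 ≠ 0),
          Real.mul_self_sqrt (by norm_num : (0:ℝ) ≤ 2)]
        norm_num
      rw [h6, mul_inv, h7]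
      exact mul_le_mul_of_nonneg_left h5 (by positivity)
    calc (-W.im) * s2 ≤ |W.im| * |s2| := h1
      _ ≤ ((Real.sqrt 2 / 2) * (Real.sqrt (‖z‖))⁻¹) * (A * ∑ j, |v j|) := by
          apply mul_le_mul h3 h2 (abs_nonneg _) (by positivity)
      _ ≤ (Real.sqrt (2 * q₀))⁻¹ * (A * ∑ j, |v j|) := by
          apply mul_le_mul_of_nonneg_right h4
          have : (0:ℝ) ≤ ∑ j, |v j| := Finset.sum_nonneg fun j _ => abs_nonneg _
          positivity
      _ = (A / Real.sqrt (2 * q₀)) * ∑ j, |v j| := by ring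
  linarith

end


/- A complex Borel measure `ν` on `ℝ^m` with finite total variation `|ν|` is encoded by
its total variation measure `μ = |ν|` (a finite Borel measure) together with a
Radon–Nikodym density `ρ` of modulus one, so that `dν = ρ dμ` and `d|ν| = dμ`. -/
theorem stmt13 (m : ℕ) (hm : 1 ≤ m)
    (μ : Measure (Fin m → ℝ)) [IsFiniteMeasure μ]
    (ρ : (Fin m → ℝ) → ℂ) (hρ : Measurable ρ) (hρ1 : ∀ v, ‖ρ v‖ = 1)
    (β : ℝ) (hβ : 0 < β) (c : Fin m → ℝ)
    (A : ℝ) (hA : 0 ≤ A) (hcA : ∀ j, |c j| ≤ A)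
    (q₀ : ℝ) (hq₀ : 0 < q₀)
    (hint : (∫⁻ v, ENNReal.ofReal
        (Real.exp ((A / Real.sqrt (2 * q₀)) * ∑ j, |v j|)) ∂μ) < ⊤)
    (q : ℝ) (hq : q₀ < |q|) :
    Filter.Tendsto
      (fun z : ℂ => ∫ v, Complex.exp (-((β : ℂ)/(2*z)) * ∑ j, (v j : ℂ)^2
          + Complex.I * Complex.exp (-(1/2) * Complex.log z)
            * ∑ j, (c j : ℂ) * (v j : ℂ)) * ρ v ∂μ)
      (nhdsWithin (-(Complex.I * (q : ℂ))) {z : ℂ | 0 < z.re})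
      (nhds (∫ v, Complex.exp (-(Complex.I * (β : ℂ))/(2*(q : ℂ)) * ∑ j, (v j : ℂ)^2
          + Complex.I * ((1 + Complex.I * (Real.sign q : ℂ)) / (Real.sqrt (2 * |q|) : ℂ))
            * ∑ j, (c j : ℂ) * (v j : ℂ)) * ρ v ∂μ)) := by
  have hqne : q ≠ 0 := by
    intro h; rw [h] at hq; simp at hq; linarith
  have hqC : (q : ℂ) ≠ 0 := Complex.ofReal_ne_zero.2 hqne
  set z₀ : ℂ := -(Complex.I * (q : ℂ)) with hz₀def
  have hz₀ : z₀ ≠ 0 := by simp [hz₀def, Complex.I_ne_zero, hqC]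
  have habsz₀ : ‖z₀‖ = |q| := by
    rw [hz₀def, norm_neg, norm_mul, Complex.norm_I, Complex.norm_real, Real.norm_eq_abs, one_mul]
  have him : z₀.im ≠ 0 := by simp [hz₀def, hqne]
  apply MeasureTheory.tendsto_integral_filter_of_dominated_convergence
    (bound := fun v => Real.exp ((A / Real.sqrt (2 * q₀)) * ∑ j, |v j|))
  · -- measurability
    apply Filter.Eventually.of_forall
    intro z
    apply Measurable.aestronglyMeasurable
    apply Measurable.mul _ hρ
    apply Complex.measurable_exp.comp
    fun_prop
  · -- bound
    have h1 : ∀ᶠ z in nhdsWithin z₀ {z : ℂ | 0 < z.re}, z ∈ {z : ℂ | 0 < z.re} :=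
      self_mem_nhdsWithin
    have h2 : ∀ᶠ z in nhdsWithin z₀ {z : ℂ | 0 < z.re}, q₀ < ‖z‖ := by
      apply nhdsWithin_le_nhds
      have hcA : ContinuousAt (fun z : ℂ => ‖z‖) z₀ :=
        continuous_norm.continuousAt
      exact hcA (lt_mem_nhds (show q₀ < ‖z₀‖ by rw [habsz₀]; exact hq))
    filter_upwards [h1, h2] with z hz1 hz2
    apply ae_of_all
    intro v
    exact norm_bound_lemma β A q₀ hβ hA hq₀ c v hcA (ρ v) (hρ1 v) z hz1 hz2
  · -- integrable bound
    constructor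
    · apply Continuous.aestronglyMeasurable
      fun_prop
    · simp only [HasFiniteIntegral]
      refine lt_of_eq_of_lt (lintegral_congr fun v => ?_) hint
      rw [← ofReal_norm, Real.norm_eq_abs, abs_of_pos (Real.exp_pos _)]
  · -- pointwise tendsto
    apply ae_of_all
    intro v
    have hlog : ContinuousAt Complex.log z₀ :=
      continuousAt_clog (Complex.mem_slitPlane_iff.2 (Or.inr him))
    have h2z : (2 : ℂ) * z₀ ≠ 0 := mul_ne_zero two_ne_zero hz₀
    have hdiv : ContinuousAt (fun z : ℂ => -((β : ℂ)/(2*z))) z₀ :=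
      (continuousAt_const.div (continuousAt_const.mul continuousAt_id) h2z).neg
    have hcont : ContinuousAt (fun z : ℂ =>
        Complex.exp (-((β : ℂ)/(2*z)) * ∑ j, (v j : ℂ)^2
          + Complex.I * Complex.exp (-(1/2) * Complex.log z)
            * ∑ j, (c j : ℂ) * (v j : ℂ)) * ρ v) z₀ := by
      apply ContinuousAt.mul _ continuousAt_const
      apply Complex.continuous_exp.continuousAt.comp
      apply ContinuousAt.add
      · exact hdiv.mul continuousAt_const
      · exact (continuousAt_const.mul
          (Complex.continuous_exp.continuousAt.comp (continuousAt_const.mul hlog))).mul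
          continuousAt_const
    have e1 : -(Complex.I * (β:ℂ))/(2*(q:ℂ)) = -((β:ℂ)/(2*z₀)) := by
      rw [hz₀def]
      field_simp
      ring_nf
      rw [Complex.I_sq]
      ring
    have hval : Complex.exp (-(Complex.I * (β : ℂ))/(2*(q : ℂ)) * ∑ j, (v j : ℂ)^2
          + Complex.I * ((1 + Complex.I * (Real.sign q : ℂ)) / (Real.sqrt (2 * |q|) : ℂ))
            * ∑ j, (c j : ℂ) * (v j : ℂ)) * ρ v
        = Complex.exp (-((β : ℂ)/(2*z₀)) * ∑ j, (v j : ℂ)^2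
          + Complex.I * Complex.exp (-(1/2) * Complex.log z₀)
            * ∑ j, (c j : ℂ) * (v j : ℂ)) * ρ v := by
      rw [sqrt_neg_I_mul q hqne, e1]
    rw [hval]
    exact hcont.continuousWithinAt
end

section
/- For every λ ∈ ℂ₊, the function v ↦ exp{ −(1/(2λ)) Σ_{j=1}^m Σ_{l=1}^n Δ_l (Σ_{k=l}^n v_{j,k})² + i λ^{−1/2} Σ_{j=1}^m Σ_{k=1}^n c_j v_{j,k} } is integrable with respect to the total-variation measure |ν|, and the function J* : ℂ₊ → ℂ defined by J*(λ) = ∫_{ℝ^{mn}} exp{ −(1/(2λ)) Σ_{j=1}^m Σ_{l=1}^n Δ_l (Σ_{k=l}^n v_{j,k})² + i λ^{−1/2} Σ_{j=1}^m Σ_{k=1}^n c_j v_{j,k} } dν(v) is analytic (complex differentiable) on ℂ₊. -/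
open MeasureTheory

private lemma amgm_aux (a p s : ℝ) (ha : 0 < a) (hp : 0 ≤ p) (hs : 0 ≤ s) :
    p * Real.sqrt s ≤ a / 2 * s + p ^ 2 / (2 * a) := by
  have h2 : Real.sqrt s ^ 2 = s := Real.sq_sqrt hs
  have h : 2 * a * (p * Real.sqrt s) ≤ a ^ 2 * s + p ^ 2 := by
    nlinarith [sq_nonneg (a * Real.sqrt s - p)]
  have h2a : (0:ℝ) < 2 * a := by linarith
  calc p * Real.sqrt s = 2 * a * (p * Real.sqrt s) / (2 * a) := by field_simp
    _ ≤ (a ^ 2 * s + p ^ 2) / (2 * a) := by gcongr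
    _ = a / 2 * s + p ^ 2 / (2 * a) := by field_simp

private lemma xexp_le (r : ℝ) : r * Real.exp (-r) ≤ 1 := by
  have h := Real.add_one_le_exp r
  have h2 : r * Real.exp (-r) ≤ Real.exp r * Real.exp (-r) :=
    mul_le_mul_of_nonneg_right (by linarith) (Real.exp_nonneg _)
  rwa [← Real.exp_add, add_neg_cancel, Real.exp_zero] at h2

private lemma sqrt_le_add (s : ℝ) (hs : 0 ≤ s) : Real.sqrt s ≤ 1 + s := by
  nlinarith [Real.sq_sqrt hs, Real.sqrt_nonneg s, sq_nonneg (Real.sqrt s - 1)]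

private lemma exponent_bound (a b K s t : ℝ) (ha : 0 < a) (hb : 0 ≤ b) (hK : 0 ≤ K)
    (hs : 0 ≤ s) (ht : |t| ≤ K * Real.sqrt s) :
    -(a * s) + b * t ≤ -(a / 2 * s) + (b * K) ^ 2 / (2 * a) := by
  have h1 : b * t ≤ b * |t| := mul_le_mul_of_nonneg_left (le_abs_self t) hb
  have h2 : b * |t| ≤ b * K * Real.sqrt s := by
    calc b * |t| ≤ b * (K * Real.sqrt s) := mul_le_mul_of_nonneg_left ht hb
      _ = b * K * Real.sqrt s := by ring
  have h3 := amgm_aux a (b * K) s ha (mul_nonneg hb hK) hs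
  linarith

private lemma poly_exp_bound (a C1 C2 K s t : ℝ) (ha : 0 < a) (hC1 : 0 ≤ C1) (hC2 : 0 ≤ C2)
    (hK : 0 ≤ K) (hs : 0 ≤ s) (ht : |t| ≤ K * Real.sqrt s) :
    (C1 * s + C2 * |t|) * Real.exp (-(a / 2 * s)) ≤ C1 * (2 / a) + C2 * (K * (1 + 2 / a)) := by
  have he : (0:ℝ) < Real.exp (-(a / 2 * s)) := Real.exp_pos _
  have hse : s * Real.exp (-(a / 2 * s)) ≤ 2 / a := by
    have hx := xexp_le (a / 2 * s)
    have h2 : s * Real.exp (-(a / 2 * s)) = (2 / a) * ((a / 2 * s) * Real.exp (-(a / 2 * s))) := by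
      field_simp
    rw [h2]
    calc (2 / a) * ((a / 2 * s) * Real.exp (-(a / 2 * s))) ≤ (2 / a) * 1 :=
          mul_le_mul_of_nonneg_left hx (by positivity)
      _ = 2 / a := mul_one _
  have hexple : Real.exp (-(a / 2 * s)) ≤ 1 := by
    apply Real.exp_le_one_iff.mpr
    nlinarith
  have hte : |t| * Real.exp (-(a / 2 * s)) ≤ K * (1 + 2 / a) := by
    calc |t| * Real.exp (-(a / 2 * s)) ≤ K * (1 + s) * Real.exp (-(a / 2 * s)) := by
          apply mul_le_mul_of_nonneg_right _ he.le
          calc |t| ≤ K * Real.sqrt s := ht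
            _ ≤ K * (1 + s) := mul_le_mul_of_nonneg_left (sqrt_le_add s hs) hK
      _ = K * (Real.exp (-(a / 2 * s)) + s * Real.exp (-(a / 2 * s))) := by ring
      _ ≤ K * (1 + 2 / a) := by
          apply mul_le_mul_of_nonneg_left _ hK
          linarith
  calc (C1 * s + C2 * |t|) * Real.exp (-(a / 2 * s))
      = C1 * (s * Real.exp (-(a / 2 * s))) + C2 * (|t| * Real.exp (-(a / 2 * s))) := by ring
    _ ≤ C1 * (2 / a) + C2 * (K * (1 + 2 / a)) :=
        add_le_add (mul_le_mul_of_nonneg_left hse hC1) (mul_le_mul_of_nonneg_left hte hC2)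

/- A complex Borel measure `ν` on `ℝ^{mn}` with finite total variation `|ν|` is encoded by
its total variation measure `μ = |ν|` (a finite Borel measure) together with a
Radon–Nikodym density `ρ` of modulus one, so that `dν = ρ dμ` and `d|ν| = dμ`.
A point of `ℝ^{mn}` is written as `v : Fin m → Fin n → ℝ`, `v j k = v_{j,k}`. -/
theorem stmt15 (m n : ℕ) (hm : 1 ≤ m) (hn : 1 ≤ n)
    (μ : Measure (Fin m → Fin n → ℝ)) [IsFiniteMeasure μ]
    (ρ : (Fin m → Fin n → ℝ) → ℂ) (hρ : Measurable ρ) (hρ1 : ∀ v, ‖ρ v‖ = 1)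
    (Δ : Fin n → ℝ) (hΔ : ∀ l, 0 < Δ l) (c : Fin m → ℝ) :
    (∀ z : ℂ, 0 < z.re →
      Integrable (fun v : Fin m → Fin n → ℝ =>
        Complex.exp (-(1/(2*z)) * ∑ j, ∑ l,
            (Δ l : ℂ) * ((∑ k ∈ Finset.Ici l, v j k : ℝ) : ℂ)^2
          + Complex.I * Complex.exp (-(1/2) * Complex.log z)
            * ∑ j, ∑ k, (c j : ℂ) * (v j k : ℂ))) μ)
    ∧ DifferentiableOn ℂ
        (fun z : ℂ => ∫ v, Complex.exp (-(1/(2*z)) * ∑ j, ∑ l,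
            (Δ l : ℂ) * ((∑ k ∈ Finset.Ici l, v j k : ℝ) : ℂ)^2
          + Complex.I * Complex.exp (-(1/2) * Complex.log z)
            * ∑ j, ∑ k, (c j : ℂ) * (v j k : ℂ)) * ρ v ∂μ)
        {z : ℂ | 0 < z.re} := by
  haveI : NeZero n := ⟨by omega⟩
  set l₀ : Fin n := ⟨0, hn⟩ with hl₀
  set S : (Fin m → Fin n → ℝ) → ℝ :=
    fun v => ∑ j, ∑ l, Δ l * (∑ k ∈ Finset.Ici l, v j k) ^ 2 with hS
  set T : (Fin m → Fin n → ℝ) → ℝ := fun v => ∑ j, ∑ k, c j * v j k with hT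
  have hS0 : ∀ v, 0 ≤ S v := fun v =>
    Finset.sum_nonneg fun j _ => Finset.sum_nonneg fun l _ =>
      mul_nonneg (hΔ l).le (sq_nonneg _)
  set K : ℝ := Real.sqrt ((∑ j, (c j) ^ 2) / Δ l₀) with hKdef
  have hK0 : 0 ≤ K := Real.sqrt_nonneg _
  have hTS : ∀ v, |T v| ≤ K * Real.sqrt (S v) := by
    intro v
    have hw : T v = ∑ j, c j * (∑ k, v j k) := by
      simp only [hT, Finset.mul_sum]
    have hCS : (T v) ^ 2 ≤ (∑ j, (c j) ^ 2) * (∑ j, (∑ k, v j k) ^ 2) := by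
      rw [hw]
      exact Finset.sum_mul_sq_le_sq_mul_sq _ _ _
    have hIci : Finset.Ici l₀ = Finset.univ := by
      ext k
      simp [Finset.mem_Ici, hl₀, Fin.le_def]
    have hwS : Δ l₀ * (∑ j, (∑ k, v j k) ^ 2) ≤ S v := by
      rw [Finset.mul_sum]
      apply Finset.sum_le_sum
      intro j _
      have h := Finset.single_le_sum
        (f := fun l => Δ l * (∑ k ∈ Finset.Ici l, v j k) ^ 2)
        (fun l _ => mul_nonneg (hΔ l).le (sq_nonneg _)) (Finset.mem_univ l₀)
      simpa [hIci] using h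
    have hc2 : 0 ≤ (∑ j, (c j) ^ 2) := Finset.sum_nonneg fun j _ => sq_nonneg _
    have hK2 : K ^ 2 = (∑ j, (c j) ^ 2) / Δ l₀ := Real.sq_sqrt (div_nonneg hc2 (hΔ l₀).le)
    have hT2 : (T v) ^ 2 ≤ K ^ 2 * S v := by
      rw [hK2, div_mul_eq_mul_div, le_div_iff₀ (hΔ l₀)]
      calc (T v) ^ 2 * Δ l₀
          ≤ ((∑ j, (c j) ^ 2) * (∑ j, (∑ k, v j k) ^ 2)) * Δ l₀ :=
            mul_le_mul_of_nonneg_right hCS (hΔ l₀).le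
        _ = (∑ j, (c j) ^ 2) * (Δ l₀ * (∑ j, (∑ k, v j k) ^ 2)) := by ring
        _ ≤ (∑ j, (c j) ^ 2) * S v := mul_le_mul_of_nonneg_left hwS hc2
    calc |T v| = Real.sqrt ((T v) ^ 2) := (Real.sqrt_sq_eq_abs _).symm
      _ ≤ Real.sqrt (K ^ 2 * S v) := Real.sqrt_le_sqrt hT2
      _ = K * Real.sqrt (S v) := by rw [Real.sqrt_mul (sq_nonneg K), Real.sqrt_sq hK0]
  have hSm : Measurable S := by
    simp only [hS]
    fun_prop
  have hTm : Measurable T := by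
    simp only [hT]
    fun_prop
  have hcast1 : ∀ v : Fin m → Fin n → ℝ,
      (∑ j, ∑ l, (Δ l : ℂ) * ((∑ k ∈ Finset.Ici l, v j k : ℝ) : ℂ)^2) = ((S v : ℝ) : ℂ) := by
    intro v
    simp only [hS]
    push_cast
    ring
  have hcast2 : ∀ v : Fin m → Fin n → ℝ,
      (∑ j, ∑ k, (c j : ℂ) * (v j k : ℂ)) = ((T v : ℝ) : ℂ) := by
    intro v
    simp only [hT]
    push_cast
    ring
  simp only [hcast1, hcast2]
  -- measurability of the exponential part
  have hexpmeas : ∀ z : ℂ, Measurable (fun v : Fin m → Fin n → ℝ =>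
      Complex.exp (-(1/(2*z)) * ((S v : ℝ) : ℂ)
        + Complex.I * Complex.exp (-(1/2) * Complex.log z) * ((T v : ℝ) : ℂ))) := by
    intro z
    apply Complex.measurable_exp.comp
    exact ((Complex.measurable_ofReal.comp hSm).const_mul _).add
      ((Complex.measurable_ofReal.comp hTm).const_mul _)
  -- pointwise norm bound
  have hnormbd : ∀ (z : ℂ) (aa bb : ℝ), 0 < aa → 0 ≤ bb → aa ≤ (1/(2*z)).re →
      |(Complex.exp (-(1/2) * Complex.log z)).im| ≤ bb → ∀ v : Fin m → Fin n → ℝ,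
      ‖Complex.exp (-(1/(2*z)) * ((S v : ℝ) : ℂ)
          + Complex.I * Complex.exp (-(1/2) * Complex.log z) * ((T v : ℝ) : ℂ))‖
        ≤ Real.exp (-(aa / 2 * S v) + (bb * K) ^ 2 / (2 * aa)) := by
    intro z aa bb haa hbb haz hbz v
    rw [Complex.norm_exp]
    apply Real.exp_le_exp.mpr
    have hre : (-(1/(2*z)) * ((S v : ℝ) : ℂ)
        + Complex.I * Complex.exp (-(1/2) * Complex.log z) * ((T v : ℝ) : ℂ)).re
        = -((1/(2*z)).re * S v)
          + (-(Complex.exp (-(1/2) * Complex.log z)).im) * T v := by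
      simp only [Complex.add_re, Complex.mul_re, Complex.ofReal_re, Complex.ofReal_im,
        Complex.I_re, Complex.I_im, Complex.neg_re, Complex.neg_im]
      ring
    rw [hre]
    have h1 : -((1/(2*z)).re * S v) ≤ -(aa * S v) := by nlinarith [hS0 v]
    have h2 : (-(Complex.exp (-(1/2) * Complex.log z)).im) * T v ≤ bb * |T v| := by
      calc (-(Complex.exp (-(1/2) * Complex.log z)).im) * T v
          ≤ |(-(Complex.exp (-(1/2) * Complex.log z)).im) * T v| := le_abs_self _
        _ = |(Complex.exp (-(1/2) * Complex.log z)).im| * |T v| := by rw [abs_mul, abs_neg]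
        _ ≤ bb * |T v| := mul_le_mul_of_nonneg_right hbz (abs_nonneg _)
    have h3 := exponent_bound aa bb K (S v) |T v| haa hbb hK0 (hS0 v)
      (by rw [abs_abs]; exact hTS v)
    linarith
  -- integrability
  have hint : ∀ z : ℂ, 0 < z.re → ∀ g : (Fin m → Fin n → ℝ) → ℂ, Measurable g →
      (∀ v, ‖g v‖ ≤ 1) →
      Integrable (fun v : Fin m → Fin n → ℝ =>
        Complex.exp (-(1/(2*z)) * ((S v : ℝ) : ℂ)
          + Complex.I * Complex.exp (-(1/2) * Complex.log z) * ((T v : ℝ) : ℂ)) * g v) μ := by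
    intro z hz g hg hg1
    have hz0 : z ≠ 0 := fun h => by simp [h] at hz
    have h2z : (2*z : ℂ) ≠ 0 := mul_ne_zero two_ne_zero hz0
    have h2re : ((2:ℂ)*z).re = 2 * z.re := by simp [Complex.mul_re]
    have ha : 0 < (1/(2*z)).re := by
      rw [one_div, Complex.inv_re]
      apply div_pos
      · rw [h2re]; linarith
      · exact Complex.normSq_pos.mpr h2z
    set aa := (1/(2*z)).re with haadef
    set bb := |(Complex.exp (-(1/2) * Complex.log z)).im| with hbbdef
    apply (integrable_const (Real.exp ((bb * K) ^ 2 / (2 * aa)))).mono'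
      (((hexpmeas z).mul hg).aestronglyMeasurable)
    refine ae_of_all _ fun v => ?_
    rw [Pi.mul_apply, norm_mul]
    have hb := hnormbd z aa bb ha (abs_nonneg _) le_rfl le_rfl v
    have h0 : -(aa / 2 * S v) + (bb * K) ^ 2 / (2 * aa) ≤ (bb * K) ^ 2 / (2 * aa) := by
      nlinarith [mul_nonneg ha.le (hS0 v)]
    have hfin := mul_le_mul (hb.trans (Real.exp_le_exp.mpr h0)) (hg1 v)
      (norm_nonneg _) (Real.exp_pos _).le
    simpa using hfin
  constructor
  · intro z hz
    have h := hint z hz (fun _ => 1) measurable_const (fun v => by norm_num)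
    simpa using h
  · rintro z₀ hz₀
    simp only [Set.mem_setOf_eq] at hz₀
    set δ : ℝ := z₀.re / 2 with hδdef
    have hδ0 : 0 < δ := by rw [hδdef]; linarith
    set R : ℝ := ‖z₀‖ + δ with hRdef
    have hR0 : 0 < R := by
      have := norm_nonneg z₀
      rw [hRdef]; linarith
    set a : ℝ := δ / (2 * R ^ 2) with hadef
    have ha0 : 0 < a := by
      rw [hadef]
      exact div_pos hδ0 (by nlinarith)
    set b : ℝ := Real.exp (-(1/2) * Real.log δ) with hbdef
    have hb0 : 0 < b := Real.exp_pos _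
    set C1 : ℝ := 1 / (2 * δ ^ 2) with hC1def
    have hC10 : 0 ≤ C1 := by
      rw [hC1def]; positivity
    set C2 : ℝ := b / (2 * δ) with hC2def
    have hC20 : 0 ≤ C2 := by
      rw [hC2def]
      exact div_nonneg hb0.le (by linarith)
    set M : ℝ := (C1 * (2 / a) + C2 * (K * (1 + 2 / a))) * Real.exp ((b * K) ^ 2 / (2 * a))
      with hMdef
    have hKexp : (0:ℝ) ≤ Real.exp ((b * K) ^ 2 / (2 * a)) := (Real.exp_pos _).le
    have hball : ∀ z ∈ Metric.ball z₀ δ, δ ≤ z.re ∧ ‖z‖ ≤ R := by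
      intro z hz
      rw [Metric.mem_ball, Complex.dist_eq] at hz
      have h1 : |z.re - z₀.re| ≤ ‖z - z₀‖ := by
        simpa [Complex.sub_re] using Complex.abs_re_le_norm (z - z₀)
      have h1' : |z.re - z₀.re| < δ := lt_of_le_of_lt h1 hz
      have h1'' := abs_lt.mp h1'
      constructor
      · have hz2 : z₀.re = 2 * δ := by rw [hδdef]; ring
        linarith [h1''.1]
      · have h2 : ‖z‖ ≤ ‖z₀‖ + ‖z - z₀‖ := by
          have := norm_add_le z₀ (z - z₀)
          simpa using this
        rw [hRdef]
        linarith
    have hzball : ∀ z ∈ Metric.ball z₀ δ, 0 < z.re ∧ z ≠ 0 ∧ δ ≤ ‖z‖ := by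
      intro z hz
      obtain ⟨h1, h2⟩ := hball z hz
      have hre : 0 < z.re := lt_of_lt_of_le hδ0 h1
      refine ⟨hre, ?_, le_trans h1 (Complex.re_le_norm z)⟩
      intro h
      rw [h] at hre
      simp at hre
    have hA : ∀ z ∈ Metric.ball z₀ δ, a ≤ (1/(2*z)).re := by
      intro z hz
      obtain ⟨h1, h2⟩ := hball z hz
      obtain ⟨hre, hz0, habs⟩ := hzball z hz
      have hnsq0 : 0 < Complex.normSq z := Complex.normSq_pos.mpr hz0
      have hrw : (1/(2*z)).re = z.re / (2 * Complex.normSq z) := by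
        rw [one_div, Complex.inv_re]
        rw [show ((2:ℂ)*z).re = 2 * z.re by simp [Complex.mul_re]]
        rw [show Complex.normSq ((2:ℂ)*z) = 4 * Complex.normSq z by
          rw [map_mul]
          norm_num [Complex.normSq_apply]]
        field_simp
        ring
      rw [hrw, hadef]
      have hnsq : Complex.normSq z ≤ R ^ 2 := by
        rw [Complex.normSq_eq_norm_sq]
        exact pow_le_pow_left₀ (norm_nonneg z) h2 2
      exact div_le_div₀ (lt_of_lt_of_le hδ0 h1).le h1 (by linarith) (by linarith)
    have hB : ∀ z ∈ Metric.ball z₀ δ,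
        ‖Complex.exp (-(1/2) * Complex.log z)‖ ≤ b := by
      intro z hz
      obtain ⟨hre, hz0, habs⟩ := hzball z hz
      rw [Complex.norm_exp, hbdef]
      apply Real.exp_le_exp.mpr
      have hrw : ((-(1/2) : ℂ) * Complex.log z).re = -(1/2) * Real.log ‖z‖ := by
        rw [Complex.mul_re]
        norm_num [Complex.log_re]
      rw [hrw]
      have hlog := Real.log_le_log hδ0 habs
      linarith
    have hC1b : ∀ z ∈ Metric.ball z₀ δ, ‖(1/(2*z^2) : ℂ)‖ ≤ C1 := by
      intro z hz
      obtain ⟨hre, hz0, habs⟩ := hzball z hz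
      have hrw : ‖(1/(2*z^2) : ℂ)‖ = 1 / (2 * ‖z‖ ^ 2) := by
        simp [map_div₀, map_mul, map_pow]
      rw [hrw, hC1def]
      apply one_div_le_one_div_of_le (by positivity)
      have := pow_le_pow_left₀ hδ0.le habs 2
      nlinarith
    have hC2b : ∀ z ∈ Metric.ball z₀ δ,
        ‖Complex.I * (Complex.exp (-(1/2) * Complex.log z) * (-(1/2) * z⁻¹))‖ ≤ C2 := by
      intro z hz
      obtain ⟨hre, hz0, habs⟩ := hzball z hz
      have hw := hB z hz
      have hrw : ‖Complex.I * (Complex.exp (-(1/2) * Complex.log z) * (-(1/2) * z⁻¹))‖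
          = ‖Complex.exp (-(1/2) * Complex.log z)‖ * ((1/2) * (‖z‖)⁻¹) := by
        simp [map_mul, map_inv₀]
      rw [hrw, hC2def]
      have h1 : (‖z‖)⁻¹ ≤ δ⁻¹ := by
        apply inv_anti₀ hδ0 habs
      have h2 : (1/2 : ℝ) * (‖z‖)⁻¹ ≤ (1/2) * δ⁻¹ :=
        mul_le_mul_of_nonneg_left h1 (by norm_num)
      have h3 := mul_le_mul hw h2 (by positivity) hb0.le
      calc ‖Complex.exp (-(1/2) * Complex.log z)‖ * ((1/2) * (‖z‖)⁻¹)
          ≤ b * ((1/2) * δ⁻¹) := h3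
        _ = b / (2 * δ) := by
            field_simp
    -- derivative existence on the ball
    have hdiff : ∀ v : Fin m → Fin n → ℝ, ∀ z ∈ Metric.ball z₀ δ,
        HasDerivAt (fun z : ℂ =>
          Complex.exp (-(1/(2*z)) * ((S v : ℝ) : ℂ)
            + Complex.I * Complex.exp (-(1/2) * Complex.log z) * ((T v : ℝ) : ℂ)) * ρ v)
          (Complex.exp (-(1/(2*z)) * ((S v : ℝ) : ℂ)
            + Complex.I * Complex.exp (-(1/2) * Complex.log z) * ((T v : ℝ) : ℂ))
            * (1/(2*z^2) * ((S v : ℝ) : ℂ)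
              + Complex.I * (Complex.exp (-(1/2) * Complex.log z) * (-(1/2) * z⁻¹))
                * ((T v : ℝ) : ℂ)) * ρ v) z := by
      intro v z hz
      obtain ⟨hre, hz0, habs⟩ := hzball z hz
      have hd1 : HasDerivAt (fun z : ℂ => -(1/(2*z)) * ((S v : ℝ) : ℂ))
          (1/(2*z^2) * ((S v : ℝ) : ℂ)) z := by
        have hbase : HasDerivAt (fun w : ℂ => -(1/(2*w))) (-(1/2 : ℂ) * -(z^2)⁻¹) z := by
          apply HasDerivAt.congr_of_eventuallyEq ((hasDerivAt_inv hz0).const_mul (-(1/2) : ℂ))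
          filter_upwards with w
          ring
        have h' := hbase.mul_const ((S v : ℝ) : ℂ)
        have hveq : (1/(2*z^2) : ℂ) * ((S v : ℝ) : ℂ)
            = -(1/2 : ℂ) * -(z^2)⁻¹ * ((S v : ℝ) : ℂ) := by ring
        rw [hveq]
        exact h'
      have hlog : HasDerivAt Complex.log z⁻¹ z := Complex.hasDerivAt_log (Or.inl hre)
      have hd2 := ((hlog.const_mul (-(1/2) : ℂ)).cexp.const_mul Complex.I).mul_const
        ((T v : ℝ) : ℂ)
      exact ((hd1.add hd2).cexp).mul_const (ρ v)
    -- uniform bound for the derivative on the ball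
    have hbound : ∀ v : Fin m → Fin n → ℝ, ∀ z ∈ Metric.ball z₀ δ,
        ‖Complex.exp (-(1/(2*z)) * ((S v : ℝ) : ℂ)
            + Complex.I * Complex.exp (-(1/2) * Complex.log z) * ((T v : ℝ) : ℂ))
          * (1/(2*z^2) * ((S v : ℝ) : ℂ)
            + Complex.I * (Complex.exp (-(1/2) * Complex.log z) * (-(1/2) * z⁻¹))
              * ((T v : ℝ) : ℂ)) * ρ v‖ ≤ M := by
      intro v z hz
      obtain ⟨hre, hz0, habs⟩ := hzball z hz
      rw [norm_mul, norm_mul, hρ1 v, mul_one]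
      have hE' : ‖(1/(2*z^2) * ((S v : ℝ) : ℂ)
          + Complex.I * (Complex.exp (-(1/2) * Complex.log z) * (-(1/2) * z⁻¹))
            * ((T v : ℝ) : ℂ))‖ ≤ C1 * S v + C2 * |T v| := by
        apply le_trans (norm_add_le _ _)
        apply add_le_add
        · rw [norm_mul, Complex.norm_real, Real.norm_eq_abs, abs_of_nonneg (hS0 v)]
          exact mul_le_mul_of_nonneg_right (hC1b z hz) (hS0 v)
        · rw [norm_mul, Complex.norm_real, Real.norm_eq_abs]
          exact mul_le_mul_of_nonneg_right (hC2b z hz) (abs_nonneg _)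
      have hexpb : ‖Complex.exp (-(1/(2*z)) * ((S v : ℝ) : ℂ)
          + Complex.I * Complex.exp (-(1/2) * Complex.log z) * ((T v : ℝ) : ℂ))‖
          ≤ Real.exp (-(a / 2 * S v) + (b * K) ^ 2 / (2 * a)) := by
        apply hnormbd z a b ha0 hb0.le (hA z hz)
        exact le_trans (Complex.abs_im_le_norm _) (hB z hz)
      calc ‖Complex.exp (-(1/(2*z)) * ((S v : ℝ) : ℂ)
            + Complex.I * Complex.exp (-(1/2) * Complex.log z) * ((T v : ℝ) : ℂ))‖
            * ‖(1/(2*z^2) * ((S v : ℝ) : ℂ)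
              + Complex.I * (Complex.exp (-(1/2) * Complex.log z) * (-(1/2) * z⁻¹))
                * ((T v : ℝ) : ℂ))‖
          ≤ Real.exp (-(a / 2 * S v) + (b * K) ^ 2 / (2 * a)) * (C1 * S v + C2 * |T v|) :=
            mul_le_mul hexpb hE' (norm_nonneg _) (Real.exp_pos _).le
        _ = ((C1 * S v + C2 * |T v|) * Real.exp (-(a / 2 * S v)))
              * Real.exp ((b * K) ^ 2 / (2 * a)) := by
            rw [Real.exp_add]
            ring
        _ ≤ (C1 * (2 / a) + C2 * (K * (1 + 2 / a))) * Real.exp ((b * K) ^ 2 / (2 * a)) := by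
            apply mul_le_mul_of_nonneg_right _ hKexp
            exact poly_exp_bound a C1 C2 K (S v) (T v) ha0 hC10 hC20 hK0 (hS0 v) (hTS v)
        _ = M := by rw [hMdef]
    -- measurability of the derivative integrand at z₀
    have hF'meas : AEStronglyMeasurable (fun v : Fin m → Fin n → ℝ =>
        Complex.exp (-(1/(2*z₀)) * ((S v : ℝ) : ℂ)
          + Complex.I * Complex.exp (-(1/2) * Complex.log z₀) * ((T v : ℝ) : ℂ))
          * (1/(2*z₀^2) * ((S v : ℝ) : ℂ)
            + Complex.I * (Complex.exp (-(1/2) * Complex.log z₀) * (-(1/2) * z₀⁻¹))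
              * ((T v : ℝ) : ℂ)) * ρ v) μ := by
      apply Measurable.aestronglyMeasurable
      apply Measurable.mul _ hρ
      apply Measurable.mul (hexpmeas z₀)
      exact ((Complex.measurable_ofReal.comp hSm).const_mul _).add
        ((Complex.measurable_ofReal.comp hTm).const_mul _)
    have key := hasDerivAt_integral_of_dominated_loc_of_deriv_le (μ := μ)
      (F := fun (z : ℂ) (v : Fin m → Fin n → ℝ) =>
        Complex.exp (-(1/(2*z)) * ((S v : ℝ) : ℂ)
          + Complex.I * Complex.exp (-(1/2) * Complex.log z) * ((T v : ℝ) : ℂ)) * ρ v)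
      (F' := fun (z : ℂ) (v : Fin m → Fin n → ℝ) =>
        Complex.exp (-(1/(2*z)) * ((S v : ℝ) : ℂ)
          + Complex.I * Complex.exp (-(1/2) * Complex.log z) * ((T v : ℝ) : ℂ))
          * (1/(2*z^2) * ((S v : ℝ) : ℂ)
            + Complex.I * (Complex.exp (-(1/2) * Complex.log z) * (-(1/2) * z⁻¹))
              * ((T v : ℝ) : ℂ)) * ρ v)
      (bound := fun _ => M) (Metric.ball_mem_nhds z₀ hδ0)
      (Filter.Eventually.of_forall fun z => ((hexpmeas z).mul hρ).aestronglyMeasurable)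
      (hint z₀ hz₀ ρ hρ (fun v => (hρ1 v).le))
      hF'meas
      (ae_of_all _ hbound)
      (integrable_const M)
      (ae_of_all _ hdiff)
    exact key.2.differentiableAt.differentiableWithinAt
end

section
/- Suppose A ≥ 0 satisfies |c_j| ≤ A for all j = 1,…,m, q₀ > 0, and ∫_{ℝ^{mn}} exp{ (A/√(2q₀)) Σ_{j=1}^m Σ_{k=1}^n |v_{j,k}| } d|ν|(v) < ∞. Then for every real number q with |q| > q₀, the limit of J*(λ) = ∫_{ℝ^{mn}} exp{ −(1/(2λ)) Σ_{j=1}^m Σ_{l=1}^n Δ_l (Σ_{k=l}^n v_{j,k})² + i λ^{−1/2} Σ_{j=1}^m Σ_{k=1}^n c_j v_{j,k} } dν(v) as λ → −iq with λ ∈ ℂ₊ exists and equals ∫_{ℝ^{mn}} exp{ −(i/(2q)) Σ_{j=1}^m Σ_{l=1}^n Δ_l (Σ_{k=l}^n v_{j,k})² + i ((1 + i·sign(q))/√(2|q|)) Σ_{j=1}^m Σ_{k=1}^n c_j v_{j,k} } dν(v); here (1 + i·sign(q))/√(2|q|) is the principal value of (−iq)^{−1/2}. -/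
open MeasureTheory

lemma aux_w0_sq (q : ℝ) (hq : q ≠ 0) :
    ((1 + Complex.I * (Real.sign q : ℂ)) / (Real.sqrt (2 * |q|) : ℂ))^2 = (-(Complex.I * q))⁻¹ := by
  have h2 : ((Real.sqrt (2*|q|) : ℂ))^2 = (2*|q| : ℝ) := by
    norm_cast
    exact Real.sq_sqrt (by positivity)
  have hz : -(Complex.I * q) ≠ 0 := by
    simp [Complex.ext_iff, hq]
  have h3 : ((2*|q| : ℝ) : ℂ) ≠ 0 := by
    simp; positivity
  rw [div_pow, h2, div_eq_iff h3, inv_mul_eq_div, eq_div_iff hz]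
  rcases hq.lt_or_gt with h | h
  · rw [Real.sign_of_neg h, abs_of_neg h]
    push_cast
    linear_combination ((2:ℂ)*q - Complex.I*q) * Complex.I_sq
  · rw [Real.sign_of_pos h, abs_of_pos h]
    push_cast
    linear_combination (-(2:ℂ)*q - Complex.I*q) * Complex.I_sq

lemma aux_wz_sq (z : ℂ) (hz : z ≠ 0) :
    Complex.exp (-(1/2) * Complex.log z) ^ 2 = z⁻¹ := by
  rw [← Complex.exp_nat_mul, show ((2:ℕ):ℂ) * (-(1/2) * Complex.log z) = -Complex.log z by
    push_cast; ring, Complex.exp_neg, Complex.exp_log hz]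

lemma aux_wz_re_pos (z : ℂ) (hz : z.im ≠ 0) :
    0 < (Complex.exp (-(1/2) * Complex.log z)).re := by
  rw [Complex.exp_re]
  apply mul_pos (Real.exp_pos _)
  apply Real.cos_pos_of_mem_Ioo
  have h1 : (-(1/2) * Complex.log z).im = -(1/2) * z.arg := by
    simp [Complex.log_im]
  rw [h1]
  have h2 : z.arg < Real.pi :=
    lt_of_le_of_ne (Complex.arg_le_pi z) (Complex.arg_eq_pi_iff.not.mpr (by simp [hz]))
  have h3 := Complex.neg_pi_lt_arg z
  constructor <;> [nlinarith; nlinarith]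

lemma aux_sq_eq (a b : ℂ) (h : a^2 = b^2) (ha : 0 < a.re) (hb : 0 < b.re) : a = b := by
  rcases sq_eq_sq_iff_eq_or_eq_neg.mp h with h1 | h1
  · exact h1
  · exfalso; rw [h1] at ha; simp [Complex.neg_re] at ha; linarith

lemma aux_w0_re (q : ℝ) (hq : q ≠ 0) :
    ((1 + Complex.I * (Real.sign q : ℂ)) / (Real.sqrt (2 * |q|) : ℂ)).re
      = 1 / Real.sqrt (2*|q|) := by
  have hr : (0:ℝ) < Real.sqrt (2*|q|) := Real.sqrt_pos.mpr (by positivity)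
  have h22 : Real.sqrt 2 * Real.sqrt |q| * (Real.sqrt 2 * Real.sqrt |q|) = 2 * |q| := by
    rw [← Real.sqrt_mul (by norm_num : (0:ℝ) ≤ 2)]
    exact Real.mul_self_sqrt (by positivity)
  simp [Complex.div_re, Complex.normSq_ofReal]
  field_simp
  linear_combination h22

lemma aux_w0_im (q : ℝ) (hq : q ≠ 0) :
    ((1 + Complex.I * (Real.sign q : ℂ)) / (Real.sqrt (2 * |q|) : ℂ)).im
      = Real.sign q / Real.sqrt (2*|q|) := by
  have hr : (0:ℝ) < Real.sqrt (2*|q|) := Real.sqrt_pos.mpr (by positivity)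
  have h22 : Real.sqrt 2 * Real.sqrt |q| * (Real.sqrt 2 * Real.sqrt |q|) = 2 * |q| := by
    rw [← Real.sqrt_mul (by norm_num : (0:ℝ) ≤ 2)]
    exact Real.mul_self_sqrt (by positivity)
  simp [Complex.div_im, Complex.normSq_ofReal]
  field_simp
  linear_combination Real.sign q * h22

lemma aux_W_eq (q : ℝ) (hq : q ≠ 0) :
    Complex.exp (-(1/2) * Complex.log (-(Complex.I * q)))
      = (1 + Complex.I * (Real.sign q : ℂ)) / (Real.sqrt (2 * |q|) : ℂ) := by
  have hz : -(Complex.I * (q:ℂ)) ≠ 0 := by simp [Complex.ext_iff, hq]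
  have him : (-(Complex.I * (q:ℂ))).im ≠ 0 := by simp [hq]
  apply aux_sq_eq
  · rw [aux_wz_sq _ hz, aux_w0_sq q hq]
  · exact aux_wz_re_pos _ him
  · rw [aux_w0_re q hq]
    positivity


/- A complex Borel measure `ν` on `ℝ^{mn}` with finite total variation `|ν|` is encoded by
its total variation measure `μ = |ν|` (a finite Borel measure) together with a
Radon–Nikodym density `ρ` of modulus one, so that `dν = ρ dμ` and `d|ν| = dμ`.
A point of `ℝ^{mn}` is written as `v : Fin m → Fin n → ℝ`, `v j k = v_{j,k}`. -/
theorem stmt16 (m n : ℕ) (hm : 1 ≤ m) (hn : 1 ≤ n)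
    (μ : Measure (Fin m → Fin n → ℝ)) [IsFiniteMeasure μ]
    (ρ : (Fin m → Fin n → ℝ) → ℂ) (hρ : Measurable ρ) (hρ1 : ∀ v, ‖ρ v‖ = 1)
    (Δ : Fin n → ℝ) (hΔ : ∀ l, 0 < Δ l) (c : Fin m → ℝ)
    (A : ℝ) (hA : 0 ≤ A) (hcA : ∀ j, |c j| ≤ A)
    (q₀ : ℝ) (hq₀ : 0 < q₀)
    (hint : (∫⁻ v, ENNReal.ofReal
        (Real.exp ((A / Real.sqrt (2 * q₀)) * ∑ j, ∑ k, |v j k|)) ∂μ) < ⊤)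
    (q : ℝ) (hq : q₀ < |q|) :
    Filter.Tendsto
      (fun z : ℂ => ∫ v, Complex.exp (-(1/(2*z)) * ∑ j, ∑ l,
            (Δ l : ℂ) * ((∑ k ∈ Finset.Ici l, v j k : ℝ) : ℂ)^2
          + Complex.I * Complex.exp (-(1/2) * Complex.log z)
            * ∑ j, ∑ k, (c j : ℂ) * (v j k : ℂ)) * ρ v ∂μ)
      (nhdsWithin (-(Complex.I * (q : ℂ))) {z : ℂ | 0 < z.re})
      (nhds (∫ v, Complex.exp (-(Complex.I/(2*(q : ℂ))) * ∑ j, ∑ l,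
            (Δ l : ℂ) * ((∑ k ∈ Finset.Ici l, v j k : ℝ) : ℂ)^2
          + Complex.I * ((1 + Complex.I * (Real.sign q : ℂ)) / (Real.sqrt (2 * |q|) : ℂ))
            * ∑ j, ∑ k, (c j : ℂ) * (v j k : ℂ)) * ρ v ∂μ)) := by
  have hqne : q ≠ 0 := by
    intro h; rw [h] at hq; simp at hq; linarith
  set z₀ : ℂ := -(Complex.I * (q:ℂ)) with hz₀def
  have hz₀ : z₀ ≠ 0 := by simp [hz₀def, Complex.ext_iff, hqne]
  have hz₀im : z₀.im ≠ 0 := by simp [hz₀def, hqne]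
  set l := nhdsWithin z₀ {z : ℂ | 0 < z.re} with hldef
  -- real-valued sums
  set Sr : (Fin m → Fin n → ℝ) → ℝ :=
    fun v => ∑ j, ∑ l, Δ l * (∑ k ∈ Finset.Ici l, v j k)^2 with hSrdef
  set Tr : (Fin m → Fin n → ℝ) → ℝ := fun v => ∑ j, ∑ k, c j * v j k with hTrdef
  set W : ℂ → ℂ := fun z => Complex.exp (-(1/2) * Complex.log z) with hWdef
  set w0 : ℂ := (1 + Complex.I * (Real.sign q : ℂ)) / (Real.sqrt (2 * |q|) : ℂ) with hw0def
  have hW0 : W z₀ = w0 := aux_W_eq q hqne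
  -- cast identities
  have hS : ∀ v : Fin m → Fin n → ℝ,
      (∑ j, ∑ l, (Δ l : ℂ) * ((∑ k ∈ Finset.Ici l, v j k : ℝ) : ℂ)^2) = ((Sr v : ℝ) : ℂ) := by
    intro v; rw [hSrdef]; push_cast; ring
  have hT : ∀ v : Fin m → Fin n → ℝ,
      (∑ j, ∑ k, (c j : ℂ) * (v j k : ℂ)) = ((Tr v : ℝ) : ℂ) := by
    intro v; rw [hTrdef]; push_cast; ring
  -- the unified integrand
  set G : ℂ → (Fin m → Fin n → ℝ) → ℂ := fun z v =>
    Complex.exp (-(1/(2*z)) * ((Sr v : ℝ) : ℂ) + Complex.I * W z * ((Tr v : ℝ) : ℂ)) * ρ v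
    with hGdef
  -- identification of `-(1/(2 z₀))`
  have hL1 : -(1/(2*z₀)) = -(Complex.I/(2*(q:ℂ))) := by
    rw [hz₀def]
    have hq' : (q:ℂ) ≠ 0 := by exact_mod_cast hqne
    field_simp
    linear_combination Complex.I_sq
  -- continuity of W at z₀
  have hWc : ContinuousAt W z₀ := by
    rw [hWdef]
    exact Complex.continuous_exp.continuousAt.comp
      ((continuousAt_const.mul (ContinuousAt.clog continuousAt_id (Or.inr hz₀im))))
  -- the filter is nontrivial
  haveI hne : l.NeBot := by
    rw [hldef]
    refine mem_closure_iff_nhdsWithin_neBot.mp ?_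
    refine Metric.mem_closure_iff.mpr fun ε hε => ⟨z₀ + (ε/2 : ℝ), ?_, ?_⟩
    · have : (z₀ + ((ε/2 : ℝ):ℂ)).re = ε/2 := by simp [hz₀def]
      simp only [Set.mem_setOf_eq, this]
      linarith
    · rw [dist_comm, Complex.dist_eq, add_sub_cancel_left, Complex.norm_real, Real.norm_eq_abs,
        abs_of_pos (by linarith : (0:ℝ) < ε/2)]
      linarith
  -- bounds
  set B : ℝ := 1 / Real.sqrt (2 * q₀) with hBdef
  have hBpos : 0 < B := by rw [hBdef]; positivity
  have hB' : 1 / Real.sqrt (2 * |q|) < B := by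
    rw [hBdef]
    apply one_div_lt_one_div_of_lt (Real.sqrt_pos.mpr (by positivity))
    exact Real.sqrt_lt_sqrt (by positivity) (by linarith)
  set g : (Fin m → Fin n → ℝ) → ℝ :=
    fun v => Real.exp ((A / Real.sqrt (2 * q₀)) * ∑ j, ∑ k, |v j k|) with hgdef
  have hSrcont : Continuous Sr := by
    rw [hSrdef]
    refine continuous_finset_sum _ fun j _ => continuous_finset_sum _ fun l' _ => ?_
    exact continuous_const.mul ((continuous_finset_sum _ fun k _ =>
      (continuous_apply k).comp (continuous_apply j)).pow 2)
  have hTrcont : Continuous Tr := by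
    rw [hTrdef]
    refine continuous_finset_sum _ fun j _ => continuous_finset_sum _ fun k _ => ?_
    exact continuous_const.mul ((continuous_apply k).comp (continuous_apply j))
  have habscont : Continuous fun v : Fin m → Fin n → ℝ => ∑ j, ∑ k, |v j k| :=
    continuous_finset_sum _ fun j _ => continuous_finset_sum _ fun k _ =>
      ((continuous_apply k).comp (continuous_apply j)).abs
  have hgint : Integrable g μ := by
    refine ⟨((Real.continuous_exp.comp (continuous_const.mul habscont))).aestronglyMeasurable, ?_⟩
    rw [hasFiniteIntegral_iff_ofReal (Filter.Eventually.of_forall fun v => (Real.exp_pos _).le)]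
    exact hint
  -- Trv bound
  have hTb : ∀ v, |Tr v| ≤ A * ∑ j, ∑ k, |v j k| := by
    intro v
    rw [hTrdef]
    calc |∑ j, ∑ k, c j * v j k| ≤ ∑ j, |∑ k, c j * v j k| := Finset.abs_sum_le_sum_abs _ _
      _ ≤ ∑ j, ∑ k, |c j * v j k| :=
          Finset.sum_le_sum fun j _ => Finset.abs_sum_le_sum_abs _ _
      _ ≤ ∑ j, ∑ k, A * |v j k| := by
          refine Finset.sum_le_sum fun j _ => Finset.sum_le_sum fun k _ => ?_
          rw [abs_mul]
          exact mul_le_mul_of_nonneg_right (hcA j) (abs_nonneg _)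
      _ = A * ∑ j, ∑ k, |v j k| := by
          simp_rw [Finset.mul_sum]
  have hSb : ∀ v, 0 ≤ Sr v := by
    intro v
    exact Finset.sum_nonneg fun j _ => Finset.sum_nonneg fun l' _ =>
      mul_nonneg (hΔ l').le (sq_nonneg _)
  -- norm of G
  have hGnorm : ∀ z v, ‖G z v‖
      = Real.exp ((-(1/(2*z))).re * Sr v + (-(W z).im) * Tr v) := by
    intro z v
    rw [hGdef]
    simp only []
    rw [norm_mul, hρ1 v, mul_one, Complex.norm_exp]
    congr 1
    simp [Complex.add_re, Complex.mul_re, Complex.mul_im]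
  -- eventual bound
  have hEb : ∀ᶠ z in l, ∀ᵐ v ∂μ, ‖G z v‖ ≤ g v := by
    have hE1 : ∀ᶠ z in l, 0 < z.re := by
      rw [hldef]; exact eventually_mem_nhdsWithin.mono fun z hz => hz
    have hE2 : ∀ᶠ z in l, |(W z).im| ≤ B := by
      have htd : Filter.Tendsto (fun z => |(W z).im|) l (nhds (1 / Real.sqrt (2*|q|))) := by
        have h1 : Filter.Tendsto W l (nhds w0) := by
          rw [← hW0]; exact hWc.tendsto.mono_left nhdsWithin_le_nhds
        have h2 : |w0.im| = 1 / Real.sqrt (2*|q|) := by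
          have hs : |Real.sign q| = 1 := by
            rcases hqne.lt_or_gt with h | h
            · rw [Real.sign_of_neg h]; norm_num
            · rw [Real.sign_of_pos h]; norm_num
          rw [hw0def, aux_w0_im q hqne, abs_div, hs, _root_.abs_of_nonneg (Real.sqrt_nonneg _)]
        rw [← h2]
        exact ((Complex.continuous_im.tendsto w0).comp h1).abs
      exact (htd.eventually_lt_const hB').mono fun z hz => hz.le
    filter_upwards [hE1, hE2] with z hz1 hz2
    refine Filter.Eventually.of_forall fun v => ?_
    rw [hGnorm z v, hgdef]
    apply Real.exp_le_exp.mpr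
    have habs : 0 ≤ ∑ j, ∑ k, |v j k| :=
      Finset.sum_nonneg fun j _ => Finset.sum_nonneg fun k _ => abs_nonneg _
    have ht1 : (-(1/(2*z))).re * Sr v ≤ 0 := by
      apply mul_nonpos_of_nonpos_of_nonneg _ (hSb v)
      rw [Complex.neg_re, neg_nonpos, one_div, Complex.inv_re]
      apply div_nonneg _ (Complex.normSq_nonneg _)
      simp [Complex.mul_re]
      linarith
    have ht2 : -(W z).im * Tr v ≤ B * (A * ∑ j, ∑ k, |v j k|) := by
      calc -(W z).im * Tr v ≤ |(-(W z).im) * Tr v| := le_abs_self _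
        _ = |(W z).im| * |Tr v| := by rw [abs_mul, abs_neg]
        _ ≤ B * (A * ∑ j, ∑ k, |v j k|) :=
            mul_le_mul hz2 (hTb v) (abs_nonneg _) hBpos.le
    have : B * (A * ∑ j, ∑ k, |v j k|) = A / Real.sqrt (2 * q₀) * ∑ j, ∑ k, |v j k| := by
      rw [hBdef]; ring
    linarith
  -- measurability
  have hGmeas : ∀ z : ℂ, AEStronglyMeasurable (G z) μ := by
    intro z
    rw [hGdef]
    apply Measurable.aestronglyMeasurable
    apply Measurable.mul _ hρ
    apply Complex.measurable_exp.comp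
    apply Measurable.add
    · exact (measurable_const.mul (Complex.measurable_ofReal.comp hSrcont.measurable))
    · exact (measurable_const.mul (Complex.measurable_ofReal.comp hTrcont.measurable))
  -- pointwise convergence
  have hGlim : ∀ᵐ v ∂μ, Filter.Tendsto (fun z => G z v) l (nhds (G z₀ v)) := by
    refine Filter.Eventually.of_forall fun v => ?_
    have hc : ContinuousAt (fun z => G z v) z₀ := by
      rw [hGdef]
      apply ContinuousAt.mul _ continuousAt_const
      apply Complex.continuous_exp.continuousAt.comp
      apply ContinuousAt.add
      · apply ContinuousAt.mul _ continuousAt_const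
        apply ContinuousAt.neg
        exact (continuousAt_const.div (continuousAt_const.mul continuousAt_id)
          (by simpa using mul_ne_zero two_ne_zero hz₀))
      · exact (continuousAt_const.mul hWc).mul continuousAt_const
    exact hc.tendsto.mono_left nhdsWithin_le_nhds
  have key : Filter.Tendsto (fun z => ∫ v, G z v ∂μ) l (nhds (∫ v, G z₀ v ∂μ)) :=
    tendsto_integral_filter_of_dominated_convergence g
      (Filter.Eventually.of_forall hGmeas) hEb hgint hGlim
  simp only [hS, hT, ← hW0, ← hL1]
  exact key
end
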